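/- arXiv:solv-int/9803003 — 8 statements merged into one kernel-verified Lean document; each statement's English description precedes it below -/
import Mathlib

section
/- Let U ⊆ ℝ³ be open and A : ℝ³ → ℝ be smooth, with coordinates written (x,y,z), and suppose the second z-derivative A'' = ∂²A/∂z² is nonzero at every point of U. On U define S = log|A''|, P = ∂S/∂x + z·∂S/∂y, δ(A) = z·∂²A/∂y∂z + ∂²A/∂x∂z − ∂A/∂y, and f = −δ(A)/A''. Write primes for ∂/∂z. Then at every point of U, the 5×5 determinant Δ(A) = det [[A'', 0, 0, 0, δ(A)], [S', 1, 0, 0, P], [S'', S', 1, 0, P'], [S''', 2S'', S', 1, P''], [S'''', 3S''', 3S'', S', P''']] vanishes if and only if the fourth z-derivative ∂⁴f/∂z⁴ vanishes at that point. In particular, Δ(A) ≡ 0 on U if and only if f(x,y,z) is, on each z-interval, a polynomial in z of degree at most three. -/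
noncomputable section

/-- Partial derivative in the third variable `z`. -/
def pZ (A : ℝ → ℝ → ℝ → ℝ) : ℝ → ℝ → ℝ → ℝ := fun x y z => deriv (fun t => A x y t) z

/-- Partial derivative in the first variable `x`. -/
def pX (A : ℝ → ℝ → ℝ → ℝ) : ℝ → ℝ → ℝ → ℝ := fun x y z => deriv (fun t => A t y z) x

/-- Partial derivative in the second variable `y`. -/
def pY (A : ℝ → ℝ → ℝ → ℝ) : ℝ → ℝ → ℝ → ℝ := fun x y z => deriv (fun t => A x t z) y

/-- `S = log |A''|`. -/
def Sfun (A : ℝ → ℝ → ℝ → ℝ) : ℝ → ℝ → ℝ → ℝ := fun x y z => Real.log |pZ (pZ A) x y z|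

/-- `P = S_x + z S_y`. -/
def Pfun (A : ℝ → ℝ → ℝ → ℝ) : ℝ → ℝ → ℝ → ℝ :=
  fun x y z => pX (Sfun A) x y z + z * pY (Sfun A) x y z

/-- `δ(A) = z A'_y + A'_x - A_y`. -/
def deltaFun (A : ℝ → ℝ → ℝ → ℝ) : ℝ → ℝ → ℝ → ℝ :=
  fun x y z => z * pY (pZ A) x y z + pX (pZ A) x y z - pY A x y z

/-- `f = -δ(A)/A''`. -/
def fFun (A : ℝ → ℝ → ℝ → ℝ) : ℝ → ℝ → ℝ → ℝ :=
  fun x y z => -deltaFun A x y z / pZ (pZ A) x y z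

/-- The 5×5 determinant `Δ(A)`. -/
def DeltaDet (A : ℝ → ℝ → ℝ → ℝ) (x y z : ℝ) : ℝ :=
  Matrix.det
    !![pZ (pZ A) x y z, 0, 0, 0, deltaFun A x y z;
       pZ (Sfun A) x y z, 1, 0, 0, Pfun A x y z;
       pZ (pZ (Sfun A)) x y z, pZ (Sfun A) x y z, 1, 0, pZ (Pfun A) x y z;
       pZ (pZ (pZ (Sfun A))) x y z, 2 * pZ (pZ (Sfun A)) x y z, pZ (Sfun A) x y z, 1,
         pZ (pZ (Pfun A)) x y z;
       pZ (pZ (pZ (pZ (Sfun A)))) x y z, 3 * pZ (pZ (pZ (Sfun A))) x y z,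
         3 * pZ (pZ (Sfun A)) x y z, pZ (Sfun A) x y z, pZ (pZ (pZ (Pfun A))) x y z]

open scoped ContDiff

namespace Aux0

abbrev E3 := ℝ × ℝ × ℝ
def unc (B : ℝ → ℝ → ℝ → ℝ) : E3 → ℝ := fun v => B v.1 v.2.1 v.2.2
def e1 : E3 := (1,0,0)
def e2 : E3 := (0,1,0)
def e3 : E3 := (0,0,1)

lemma h1inf : (∞ : WithTop ℕ∞) ≠ 0 := by simp
lemma h2inf : minSmoothness ℝ 2 ≤ ∞ := by
  rw [minSmoothness_of_isRCLikeNormedField]; exact WithTop.coe_le_coe.2 le_top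
lemma hsinf : (∞ : WithTop ℕ∞) + 1 ≤ ∞ := by simp

variable {B : ℝ → ℝ → ℝ → ℝ} {x y z : ℝ}

lemma hasDerivAt_pX (h : ContDiff ℝ ∞ (unc B)) :
    HasDerivAt (fun t => B t y z) (fderiv ℝ (unc B) (x, y, z) e1) x := by
  have hline : HasDerivAt (fun t : ℝ => ((t, y, z) : E3)) e1 x :=
    HasDerivAt.prodMk (hasDerivAt_id x) (HasDerivAt.prodMk (hasDerivAt_const x y) (hasDerivAt_const x z))
  exact ((h.differentiable h1inf) (x, y, z)).hasFDerivAt.comp_hasDerivAt x hline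

lemma hasDerivAt_pY (h : ContDiff ℝ ∞ (unc B)) :
    HasDerivAt (fun t => B x t z) (fderiv ℝ (unc B) (x, y, z) e2) y := by
  have hline : HasDerivAt (fun t : ℝ => ((x, t, z) : E3)) e2 y :=
    HasDerivAt.prodMk (hasDerivAt_const y x) (HasDerivAt.prodMk (hasDerivAt_id y) (hasDerivAt_const y z))
  exact ((h.differentiable h1inf) (x, y, z)).hasFDerivAt.comp_hasDerivAt y hline

lemma hasDerivAt_pZ (h : ContDiff ℝ ∞ (unc B)) :
    HasDerivAt (fun t => B x y t) (fderiv ℝ (unc B) (x, y, z) e3) z := by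
  have hline : HasDerivAt (fun t : ℝ => ((x, y, t) : E3)) e3 z :=
    HasDerivAt.prodMk (hasDerivAt_const z x) (HasDerivAt.prodMk (hasDerivAt_const z y) (hasDerivAt_id z))
  exact ((h.differentiable h1inf) (x, y, z)).hasFDerivAt.comp_hasDerivAt z hline

lemma pX_eq (h : ContDiff ℝ ∞ (unc B)) : pX B x y z = fderiv ℝ (unc B) (x, y, z) e1 :=
  (hasDerivAt_pX h).deriv

lemma pY_eq (h : ContDiff ℝ ∞ (unc B)) : pY B x y z = fderiv ℝ (unc B) (x, y, z) e2 :=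
  (hasDerivAt_pY h).deriv

lemma pZ_eq (h : ContDiff ℝ ∞ (unc B)) : pZ B x y z = fderiv ℝ (unc B) (x, y, z) e3 :=
  (hasDerivAt_pZ h).deriv

lemma unc_fderiv_apply (h : ContDiff ℝ ∞ (unc B)) (e : E3) :
    ContDiff ℝ ∞ (fun v => fderiv ℝ (unc B) v e) :=
  (h.fderiv_right hsinf).clm_apply contDiff_const

lemma unc_pX (h : ContDiff ℝ ∞ (unc B)) : ContDiff ℝ ∞ (unc (pX B)) := by
  have : unc (pX B) = fun v => fderiv ℝ (unc B) v e1 := by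
    funext v; exact pX_eq h
  rw [this]; exact unc_fderiv_apply h e1

lemma unc_pY (h : ContDiff ℝ ∞ (unc B)) : ContDiff ℝ ∞ (unc (pY B)) := by
  have : unc (pY B) = fun v => fderiv ℝ (unc B) v e2 := by
    funext v; exact pY_eq h
  rw [this]; exact unc_fderiv_apply h e2

lemma unc_pZ (h : ContDiff ℝ ∞ (unc B)) : ContDiff ℝ ∞ (unc (pZ B)) := by
  have : unc (pZ B) = fun v => fderiv ℝ (unc B) v e3 := by
    funext v; exact pZ_eq h
  rw [this]; exact unc_fderiv_apply h e3

lemma fderiv_fderiv_apply (h : ContDiff ℝ ∞ (unc B)) (v : E3) (e e' : E3) :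
    fderiv ℝ (fun p => fderiv ℝ (unc B) p e) v e' =
      fderiv ℝ (fderiv ℝ (unc B)) v e' e := by
  have hc : DifferentiableAt ℝ (fderiv ℝ (unc B)) v :=
    ((h.fderiv_right hsinf).differentiable h1inf) v
  rw [fderiv_clm_apply hc (differentiableAt_const e)]
  simp

/-- Clairaut for `pX`/`pZ`. -/
lemma pZ_pX_comm (h : ContDiff ℝ ∞ (unc B)) : pZ (pX B) x y z = pX (pZ B) x y z := by
  have hx : (fun t => pX B x y t) = fun t => fderiv ℝ (unc B) (x, y, t) e1 := by
    funext t; exact pX_eq h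
  have hz : (fun t => pZ B t y z) = fun t => fderiv ℝ (unc B) (t, y, z) e3 := by
    funext t; exact pZ_eq h
  have hsym := (h.contDiffAt (x := (x,y,z))).isSymmSndFDerivAt h2inf
  have h1 : pZ (pX B) x y z = fderiv ℝ (fun p => fderiv ℝ (unc B) p e1) (x,y,z) e3 := by
    rw [pZ_eq (B := pX B) (unc_pX h),
      show unc (pX B) = fun v => fderiv ℝ (unc B) v e1 from funext fun v => pX_eq h]
  have h2 : pX (pZ B) x y z = fderiv ℝ (fun p => fderiv ℝ (unc B) p e3) (x,y,z) e1 := by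
    rw [pX_eq (B := pZ B) (unc_pZ h),
      show unc (pZ B) = fun v => fderiv ℝ (unc B) v e3 from funext fun v => pZ_eq h]
  rw [h1, h2, fderiv_fderiv_apply h, fderiv_fderiv_apply h]
  exact hsym e3 e1

lemma pZ_pY_comm (h : ContDiff ℝ ∞ (unc B)) : pZ (pY B) x y z = pY (pZ B) x y z := by
  have hsym := (h.contDiffAt (x := (x,y,z))).isSymmSndFDerivAt h2inf
  have h1 : pZ (pY B) x y z = fderiv ℝ (fun p => fderiv ℝ (unc B) p e2) (x,y,z) e3 := by
    rw [pZ_eq (B := pY B) (unc_pY h),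
      show unc (pY B) = fun v => fderiv ℝ (unc B) v e2 from funext fun v => pY_eq h]
  have h2 : pY (pZ B) x y z = fderiv ℝ (fun p => fderiv ℝ (unc B) p e3) (x,y,z) e2 := by
    rw [pY_eq (B := pZ B) (unc_pZ h),
      show unc (pZ B) = fun v => fderiv ℝ (unc B) v e3 from funext fun v => pZ_eq h]
  rw [h1, h2, fderiv_fderiv_apply h, fderiv_fderiv_apply h]
  exact hsym e3 e2

/-- restriction to a coordinate line is smooth -/
lemma lineZ_smooth (h : ContDiff ℝ ∞ (unc B)) (x y : ℝ) :
    ContDiff ℝ ∞ (fun t => B x y t) :=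
  h.comp (contDiff_const.prodMk (contDiff_const.prodMk contDiff_id))

lemma cd_deriv {f : ℝ → ℝ} (h : ContDiff ℝ ∞ f) : ContDiff ℝ ∞ (deriv f) :=
  (contDiff_infty_iff_deriv.mp h).2


section OneVar

variable {I : Set ℝ} {f g : ℝ → ℝ}

lemma eqOn_deriv (hI : IsOpen I) (h : Set.EqOn f g I) :
    Set.EqOn (deriv f) (deriv g) I := fun _t ht =>
  Filter.EventuallyEq.deriv_eq (Filter.eventuallyEq_of_mem (hI.mem_nhds ht) h)

lemma hasDerivAt_of_contDiffOn (hI : IsOpen I) (hf : ContDiffOn ℝ ∞ f I) {t : ℝ}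
    (ht : t ∈ I) : HasDerivAt f (deriv f t) t :=
  (((hf t ht).contDiffAt (hI.mem_nhds ht)).differentiableAt h1inf).hasDerivAt

lemma contDiffOn_deriv (hI : IsOpen I) (hf : ContDiffOn ℝ ∞ f I) :
    ContDiffOn ℝ ∞ (deriv f) I :=
  hf.deriv_of_isOpen hI hsinf

lemma eqOn_const_of_deriv_zero (hI : IsOpen I) (hc : Convex ℝ I)
    (hf : ∀ t ∈ I, HasDerivAt f (0 : ℝ) t) {t0 t1 : ℝ} (h0 : t0 ∈ I) (h1 : t1 ∈ I) :
    f t1 = f t0 := by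
  refine hc.is_const_of_fderivWithin_eq_zero
    (fun t ht => (hf t ht).differentiableAt.differentiableWithinAt) (fun t ht => ?_) h1 h0
  rw [fderivWithin_of_isOpen hI ht]
  refine ContinuousLinearMap.ext_ring ?_
  rw [ContinuousLinearMap.zero_apply, fderiv_apply_one_eq_deriv, (hf t ht).deriv]

lemma antideriv_step (hI : IsOpen I) (hc : Convex ℝ I) {P Q : ℝ → ℝ}
    (hf : ∀ t ∈ I, HasDerivAt f (P t) t) (hQ : ∀ t : ℝ, HasDerivAt Q (P t) t)
    {t0 : ℝ} (ht0 : t0 ∈ I) : ∀ t ∈ I, f t = Q t + (f t0 - Q t0) := by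
  intro t ht
  have := eqOn_const_of_deriv_zero hI hc (f := fun s => f s - Q s)
    (fun s hs => by have h := (hf s hs).sub (hQ s); rw [sub_self] at h; exact h) ht0 ht
  have this : f t - Q t = f t0 - Q t0 := this
  linarith

lemma cubic_of_deriv4 {J : Set ℝ} (hJ : IsOpen J) (hc : Convex ℝ J) {φ : ℝ → ℝ}
    (hφ : ContDiffOn ℝ ∞ φ J) {t0 : ℝ} (ht0 : t0 ∈ J)
    (h4 : ∀ t ∈ J, deriv (deriv (deriv (deriv φ))) t = 0) :
    ∃ c0 c1 c2 c3 : ℝ, ∀ t ∈ J, φ t = c0 + c1 * t + c2 * t ^ 2 + c3 * t ^ 3 := by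
  have hφ1 := contDiffOn_deriv hJ hφ
  have hφ2 := contDiffOn_deriv hJ hφ1
  have hφ3 := contDiffOn_deriv hJ hφ2
  set C3 := deriv (deriv (deriv φ)) t0 with hC3
  have h3 : ∀ t ∈ J, deriv (deriv (deriv φ)) t = C3 := by
    intro t ht
    exact eqOn_const_of_deriv_zero hJ hc (fun s hs => by
      have h := hasDerivAt_of_contDiffOn hJ hφ3 hs
      rwa [h4 s hs] at h) ht0 ht
  have h2 : ∀ t ∈ J, deriv (deriv φ) t = C3 * t + (deriv (deriv φ) t0 - C3 * t0) := by
    refine antideriv_step hJ hc (P := fun t => C3) ?_ ?_ ht0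
    · intro t ht
      have h := hasDerivAt_of_contDiffOn hJ hφ2 ht
      rwa [h3 t ht] at h
    · intro t
      simpa using (hasDerivAt_id' (x := t)).const_mul C3
  set C2 := deriv (deriv φ) t0 - C3 * t0 with hC2
  have h1 : ∀ t ∈ J, deriv φ t = (C3 * (t ^ 2 / 2) + C2 * t) +
      (deriv φ t0 - (C3 * (t0 ^ 2 / 2) + C2 * t0)) := by
    refine antideriv_step hJ hc (P := fun t => C3 * t + C2) ?_ ?_ ht0
    · intro t ht
      have h := hasDerivAt_of_contDiffOn hJ hφ1 ht
      rwa [h2 t ht] at h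
    · intro t
      have h := (((hasDerivAt_pow 2 t).div_const 2).const_mul C3).add
        ((hasDerivAt_id' (x := t)).const_mul C2)
      refine h.congr_deriv ?_
      push_cast
      ring
  set C1 := deriv φ t0 - (C3 * (t0 ^ 2 / 2) + C2 * t0) with hC1
  have h0 : ∀ t ∈ J, φ t = (C3 * (t ^ 3 / 6) + C2 * (t ^ 2 / 2) + C1 * t) +
      (φ t0 - (C3 * (t0 ^ 3 / 6) + C2 * (t0 ^ 2 / 2) + C1 * t0)) := by
    refine antideriv_step hJ hc (P := fun t => C3 * (t ^ 2 / 2) + C2 * t + C1) ?_ ?_ ht0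
    · intro t ht
      have h := hasDerivAt_of_contDiffOn hJ hφ ht
      rwa [h1 t ht] at h
    · intro t
      have h := ((((hasDerivAt_pow 3 t).div_const 6).const_mul C3).add
        (((hasDerivAt_pow 2 t).div_const 2).const_mul C2)).add
        ((hasDerivAt_id' (x := t)).const_mul C1)
      refine h.congr_deriv ?_
      push_cast
      ring
  refine ⟨φ t0 - (C3 * (t0 ^ 3 / 6) + C2 * (t0 ^ 2 / 2) + C1 * t0), C1, C2 / 2, C3 / 6, ?_⟩
  intro t ht
  rw [h0 t ht]
  ring

lemma deriv4_cubic (c0 c1 c2 c3 : ℝ) :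
    deriv (deriv (deriv (deriv (fun t : ℝ => c0 + c1 * t + c2 * t ^ 2 + c3 * t ^ 3)))) =
      fun _ => 0 := by
  have h1 : deriv (fun t : ℝ => c0 + c1 * t + c2 * t ^ 2 + c3 * t ^ 3) =
      fun t => c1 + 2 * c2 * t + 3 * c3 * t ^ 2 := by
    funext t
    have h : HasDerivAt (fun t : ℝ => c0 + c1 * t + c2 * t ^ 2 + c3 * t ^ 3)
        (c1 + 2 * c2 * t + 3 * c3 * t ^ 2) t := by
      have h := (((hasDerivAt_const t c0).add ((hasDerivAt_id' (x := t)).const_mul c1)).add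
        ((hasDerivAt_pow 2 t).const_mul c2)).add ((hasDerivAt_pow 3 t).const_mul c3)
      refine h.congr_deriv ?_
      norm_num
      ring
    exact h.deriv
  have h2 : deriv (fun t : ℝ => c1 + 2 * c2 * t + 3 * c3 * t ^ 2) =
      fun t => 2 * c2 + 6 * c3 * t := by
    funext t
    have h : HasDerivAt (fun t : ℝ => c1 + 2 * c2 * t + 3 * c3 * t ^ 2)
        (2 * c2 + 6 * c3 * t) t := by
      have h := ((hasDerivAt_const t c1).add ((hasDerivAt_id' (x := t)).const_mul (2 * c2))).add
        ((hasDerivAt_pow 2 t).const_mul (3 * c3))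
      refine h.congr_deriv ?_
      norm_num
      ring
    exact h.deriv
  have h3 : deriv (fun t : ℝ => 2 * c2 + 6 * c3 * t) = fun _ => 6 * c3 := by
    funext t
    have h : HasDerivAt (fun t : ℝ => 2 * c2 + 6 * c3 * t) (6 * c3) t := by
      have h := (hasDerivAt_const t (2 * c2)).add ((hasDerivAt_id' (x := t)).const_mul (6 * c3))
      refine h.congr_deriv ?_
      ring
    exact h.deriv
  rw [h1, h2, h3]
  funext t
  exact deriv_const t (6 * c3)

end OneVar

lemma det5 (q u0 u1 u2 u3 u4 w0 w1 w2 w3 : ℝ) :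
    Matrix.det
      !![q, 0, 0, 0, q * u0;
         w0, 1, 0, 0, u1 + w0 * u0;
         w1, w0, 1, 0, u2 + (w1 * u0 + w0 * u1);
         w2, 2 * w1, w0, 1, u3 + ((w2 * u0 + w1 * u1) + (w1 * u1 + w0 * u2));
         w3, 3 * w2, 3 * w1, w0,
           u4 + (((w3 * u0 + w2 * u1) + (w2 * u1 + w1 * u2)) +
             ((w2 * u1 + w1 * u2) + (w1 * u2 + w0 * u3)))]
      = q * u4 := by
  have hM : (!![q, 0, 0, 0, q * u0;
         w0, 1, 0, 0, u1 + w0 * u0;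
         w1, w0, 1, 0, u2 + (w1 * u0 + w0 * u1);
         w2, 2 * w1, w0, 1, u3 + ((w2 * u0 + w1 * u1) + (w1 * u1 + w0 * u2));
         w3, 3 * w2, 3 * w1, w0,
           u4 + (((w3 * u0 + w2 * u1) + (w2 * u1 + w1 * u2)) +
             ((w2 * u1 + w1 * u2) + (w1 * u2 + w0 * u3)))] : Matrix (Fin 5) (Fin 5) ℝ)
      = !![q, 0, 0, 0, 0;
           w0, 1, 0, 0, 0;
           w1, w0, 1, 0, 0;
           w2, 2 * w1, w0, 1, 0;
           w3, 3 * w2, 3 * w1, w0, 1] *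
        !![1, 0, 0, 0, u0;
           0, 1, 0, 0, u1;
           0, 0, 1, 0, u2;
           0, 0, 0, 1, u3;
           0, 0, 0, 0, u4] := by
    ext i j
    fin_cases i <;> fin_cases j <;>
      simp [Matrix.mul_apply, Fin.sum_univ_succ] <;> ring
  rw [hM, Matrix.det_mul,
    Matrix.det_of_lowerTriangular _ (by
      intro i j hij
      fin_cases i <;> fin_cases j <;> first | rfl | exact absurd hij (by decide)),
    Matrix.det_of_upperTriangular (by
      intro i j hij
      fin_cases i <;> fin_cases j <;> first | rfl | exact absurd hij (by decide))]
  simp [Fin.prod_univ_five]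

end Aux0

namespace Aux0

variable {A : ℝ → ℝ → ℝ → ℝ}

lemma oneVar_q (hA : ContDiff ℝ ∞ (unc A)) (x y : ℝ) :
    ContDiff ℝ ∞ (fun t => pZ (pZ A) x y t) :=
  lineZ_smooth (unc_pZ (unc_pZ hA)) x y

lemma oneVar_d (hA : ContDiff ℝ ∞ (unc A)) (x y : ℝ) :
    ContDiff ℝ ∞ (fun t => deltaFun A x y t) := by
  have h : (fun t => deltaFun A x y t) =
      fun t => t * pY (pZ A) x y t + pX (pZ A) x y t - pY A x y t := rfl
  rw [h]
  exact ((contDiff_id.mul (lineZ_smooth (unc_pY (unc_pZ hA)) x y)).add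
    (lineZ_smooth (unc_pX (unc_pZ hA)) x y)).sub (lineZ_smooth (unc_pY hA) x y)

set_option maxRecDepth 4000 in
lemma key {U : Set E3} (hU : IsOpen U) (hA : ContDiff ℝ ∞ (unc A))
    (hA'' : ∀ v ∈ U, pZ (pZ A) v.1 v.2.1 v.2.2 ≠ 0)
    {x y z : ℝ} (hv : (x, y, z) ∈ U) :
    DeltaDet A x y z =
      pZ (pZ A) x y z *
        deriv (deriv (deriv (deriv
          (fun t => deltaFun A x y t / pZ (pZ A) x y t)))) z := by
  have hQ : ContDiff ℝ ∞ (unc (pZ (pZ A))) := unc_pZ (unc_pZ hA)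
  set q : ℝ → ℝ := fun t => pZ (pZ A) x y t with hq_def
  set d : ℝ → ℝ := fun t => deltaFun A x y t with hd_def
  have hq : ContDiff ℝ ∞ q := oneVar_q hA x y
  have hd : ContDiff ℝ ∞ d := oneVar_d hA x y
  obtain ⟨r, hr0, hball⟩ := Metric.isOpen_iff.1 hU _ hv
  set I := Metric.ball z r with hI_def
  have hI : IsOpen I := Metric.isOpen_ball
  have hzI : z ∈ I := Metric.mem_ball_self hr0
  have hmem : ∀ t ∈ I, (x, y, t) ∈ U := by
    intro t ht
    apply hball
    have hdist : dist ((x, y, t) : E3) (x, y, z) = dist t z := by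
      simp [Prod.dist_eq, dist_nonneg]
    rwa [Metric.mem_ball, hdist]
  have hqne : ∀ t ∈ I, q t ≠ 0 := fun t ht => hA'' (x, y, t) (hmem t ht)
  set u : ℝ → ℝ := fun t => d t / q t with hu_def
  have hu : ContDiffOn ℝ ∞ u I := hd.contDiffOn.div hq.contDiffOn hqne
  set w : ℝ → ℝ := fun t => deriv q t / q t with hw_def
  have hw : ContDiffOn ℝ ∞ w I := (cd_deriv hq).contDiffOn.div hq.contDiffOn hqne
  have hq' : ∀ t : ℝ, HasDerivAt q (deriv q t) t :=
    fun t => ((hq.differentiable h1inf) t).hasDerivAt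
  -- derivative of d
  have hd' : ∀ t : ℝ,
      HasDerivAt d (t * pY (pZ (pZ A)) x y t + pX (pZ (pZ A)) x y t) t := by
    intro t
    have hG : HasDerivAt (fun s => pY (pZ A) x y s) (pY (pZ (pZ A)) x y t) t := by
      have h1 : HasDerivAt (fun s => pY (pZ A) x y s)
          (deriv (fun s => pY (pZ A) x y s) t) t :=
        (((lineZ_smooth (unc_pY (unc_pZ hA)) x y).differentiable h1inf) t).hasDerivAt
      have h2 : deriv (fun s => pY (pZ A) x y s) t = pZ (pY (pZ A)) x y t := rfl
      rwa [h2, pZ_pY_comm (unc_pZ hA)] at h1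
    have hH : HasDerivAt (fun s => pX (pZ A) x y s) (pX (pZ (pZ A)) x y t) t := by
      have h1 : HasDerivAt (fun s => pX (pZ A) x y s)
          (deriv (fun s => pX (pZ A) x y s) t) t :=
        (((lineZ_smooth (unc_pX (unc_pZ hA)) x y).differentiable h1inf) t).hasDerivAt
      have h2 : deriv (fun s => pX (pZ A) x y s) t = pZ (pX (pZ A)) x y t := rfl
      rwa [h2, pZ_pX_comm (unc_pZ hA)] at h1
    have hK : HasDerivAt (fun s => pY A x y s) (pY (pZ A) x y t) t := by
      have h1 : HasDerivAt (fun s => pY A x y s)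
          (deriv (fun s => pY A x y s) t) t :=
        (((lineZ_smooth (unc_pY hA) x y).differentiable h1inf) t).hasDerivAt
      have h2 : deriv (fun s => pY A x y s) t = pZ (pY A) x y t := rfl
      rwa [h2, pZ_pY_comm hA] at h1
    have hcomb : HasDerivAt (fun s => s * pY (pZ A) x y s + pX (pZ A) x y s - pY A x y s)
        (1 * pY (pZ A) x y t + t * pY (pZ (pZ A)) x y t + pX (pZ (pZ A)) x y t
          - pY (pZ A) x y t) t :=
      (((hasDerivAt_id' (x := t)).mul hG).add hH).sub hK
    have hfe : d = fun s => s * pY (pZ A) x y s + pX (pZ A) x y s - pY A x y s := rfl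
    rw [hfe]
    convert hcomb using 1
    ring
  -- σ agrees with w on I
  set σ : ℝ → ℝ := fun t => pZ (Sfun A) x y t with hσ_def
  have hσw : Set.EqOn σ w I := by
    intro t ht
    have hlog : (fun s => Sfun A x y s) = fun s => Real.log (q s) := by
      funext s; exact Real.log_abs _
    show deriv (fun s => Sfun A x y s) t = deriv q t / q t
    rw [hlog]
    exact ((hq' t).log (hqne t ht)).deriv
  -- π agrees with ρ0 on I
  set π : ℝ → ℝ := fun t => Pfun A x y t with hπ_def
  set ρ0 : ℝ → ℝ := fun t => deriv u t + w t * u t with hρ0_def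
  have hπρ : Set.EqOn π ρ0 I := by
    intro t ht
    have hQt : q t ≠ 0 := hqne t ht
    have hSx : pX (Sfun A) x y t = pX (pZ (pZ A)) x y t / q t := by
      have hfun : (fun s => Sfun A s y t) = fun s => Real.log (pZ (pZ A) s y t) := by
        funext s; exact Real.log_abs _
      show deriv (fun s => Sfun A s y t) x = _
      rw [hfun]
      have hx' : HasDerivAt (fun s => pZ (pZ A) s y t) (pX (pZ (pZ A)) x y t) x := by
        have h := hasDerivAt_pX (B := pZ (pZ A)) (x := x) (y := y) (z := t) hQ
        rwa [← pX_eq hQ] at h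
      exact (hx'.log hQt).deriv
    have hSy : pY (Sfun A) x y t = pY (pZ (pZ A)) x y t / q t := by
      have hfun : (fun s => Sfun A x s t) = fun s => Real.log (pZ (pZ A) x s t) := by
        funext s; exact Real.log_abs _
      show deriv (fun s => Sfun A x s t) y = _
      rw [hfun]
      have hy' : HasDerivAt (fun s => pZ (pZ A) x s t) (pY (pZ (pZ A)) x y t) y := by
        have h := hasDerivAt_pY (B := pZ (pZ A)) (x := x) (y := y) (z := t) hQ
        rwa [← pY_eq hQ] at h
      exact (hy'.log hQt).deriv
    have hud : deriv u t =
        ((t * pY (pZ (pZ A)) x y t + pX (pZ (pZ A)) x y t) * q t - d t * deriv q t)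
          / q t ^ 2 :=
      ((hd' t).div (hq' t) hQt).deriv
    show pX (Sfun A) x y t + t * pY (Sfun A) x y t = deriv u t + w t * u t
    rw [hSx, hSy, hud]
    show _ = _ + deriv q t / q t * (d t / q t)
    field_simp
    ring
  -- iterated derivative bookkeeping
  have hu1 := contDiffOn_deriv hI hu
  have hu2 := contDiffOn_deriv hI hu1
  have hu3 := contDiffOn_deriv hI hu2
  have hw1 := contDiffOn_deriv hI hw
  have hw2 := contDiffOn_deriv hI hw1
  set ρ1 : ℝ → ℝ := fun t =>
    deriv (deriv u) t + (deriv w t * u t + w t * deriv u t) with hρ1_def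
  set ρ2 : ℝ → ℝ := fun t =>
    deriv (deriv (deriv u)) t +
      ((deriv (deriv w) t * u t + deriv w t * deriv u t) +
        (deriv w t * deriv u t + w t * deriv (deriv u) t)) with hρ2_def
  set ρ3 : ℝ → ℝ := fun t =>
    deriv (deriv (deriv (deriv u))) t +
      (((deriv (deriv (deriv w)) t * u t + deriv (deriv w) t * deriv u t) +
        (deriv (deriv w) t * deriv u t + deriv w t * deriv (deriv u) t)) +
       ((deriv (deriv w) t * deriv u t + deriv w t * deriv (deriv u) t) +
        (deriv w t * deriv (deriv u) t + w t * deriv (deriv (deriv u)) t))) with hρ3_def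
  have hρ01 : Set.EqOn (deriv ρ0) ρ1 I := by
    intro t ht
    exact ((hasDerivAt_of_contDiffOn hI hu1 ht).add
      ((hasDerivAt_of_contDiffOn hI hw ht).mul (hasDerivAt_of_contDiffOn hI hu ht))).deriv
  have hρ12 : Set.EqOn (deriv ρ1) ρ2 I := by
    intro t ht
    exact ((hasDerivAt_of_contDiffOn hI hu2 ht).add
      (((hasDerivAt_of_contDiffOn hI hw1 ht).mul (hasDerivAt_of_contDiffOn hI hu ht)).add
        ((hasDerivAt_of_contDiffOn hI hw ht).mul
          (hasDerivAt_of_contDiffOn hI hu1 ht)))).deriv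
  have hρ23 : Set.EqOn (deriv ρ2) ρ3 I := by
    intro t ht
    exact ((hasDerivAt_of_contDiffOn hI hu3 ht).add
      ((((hasDerivAt_of_contDiffOn hI hw2 ht).mul (hasDerivAt_of_contDiffOn hI hu ht)).add
        ((hasDerivAt_of_contDiffOn hI hw1 ht).mul
          (hasDerivAt_of_contDiffOn hI hu1 ht))).add
       (((hasDerivAt_of_contDiffOn hI hw1 ht).mul
          (hasDerivAt_of_contDiffOn hI hu1 ht)).add
        ((hasDerivAt_of_contDiffOn hI hw ht).mul
          (hasDerivAt_of_contDiffOn hI hu2 ht))))).deriv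
  -- entries
  have hEδ : deltaFun A x y z = q z * u z := by
    show d z = q z * (d z / q z)
    rw [mul_comm (q z) (d z / q z), div_mul_cancel₀ (d z) (hqne z hzI)]
  have hS0 : pZ (Sfun A) x y z = w z := hσw hzI
  have hS1 : pZ (pZ (Sfun A)) x y z = deriv w z := by
    show deriv σ z = deriv w z
    exact eqOn_deriv hI hσw hzI
  have hS2 : pZ (pZ (pZ (Sfun A))) x y z = deriv (deriv w) z := by
    show deriv (deriv σ) z = deriv (deriv w) z
    exact eqOn_deriv hI (eqOn_deriv hI hσw) hzI
  have hS3 : pZ (pZ (pZ (pZ (Sfun A)))) x y z = deriv (deriv (deriv w)) z := by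
    show deriv (deriv (deriv σ)) z = deriv (deriv (deriv w)) z
    exact eqOn_deriv hI (eqOn_deriv hI (eqOn_deriv hI hσw)) hzI
  have hπρ1 : Set.EqOn (deriv π) ρ1 I :=
    fun t ht => (eqOn_deriv hI hπρ ht).trans (hρ01 ht)
  have hπρ2 : Set.EqOn (deriv (deriv π)) ρ2 I :=
    fun t ht => (eqOn_deriv hI hπρ1 ht).trans (hρ12 ht)
  have hP0 : Pfun A x y z = ρ0 z := hπρ hzI
  have hP1 : pZ (Pfun A) x y z = ρ1 z := by
    show deriv π z = ρ1 z
    exact hπρ1 hzI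
  have hP2 : pZ (pZ (Pfun A)) x y z = ρ2 z := by
    show deriv (deriv π) z = ρ2 z
    exact hπρ2 hzI
  have hP3 : pZ (pZ (pZ (Pfun A))) x y z = ρ3 z := by
    show deriv (deriv (deriv π)) z = ρ3 z
    exact (eqOn_deriv hI hπρ2 hzI).trans (hρ23 hzI)
  have hq0 : pZ (pZ A) x y z = q z := rfl
  show DeltaDet A x y z = q z * deriv (deriv (deriv (deriv u))) z
  rw [DeltaDet]
  rw [hEδ, hS0, hS1, hS2, hS3, hP0, hP1, hP2, hP3, hq0]
  exact det5 (q z) (u z) (deriv u z) (deriv (deriv u) z) (deriv (deriv (deriv u)) z)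
    (deriv (deriv (deriv (deriv u))) z) (w z) (deriv w z) (deriv (deriv w) z)
    (deriv (deriv (deriv w)) z)

end Aux0

namespace Aux0

variable {A : ℝ → ℝ → ℝ → ℝ}

lemma pZ4_fFun (A : ℝ → ℝ → ℝ → ℝ) (x y z : ℝ) :
    pZ (pZ (pZ (pZ (fFun A)))) x y z =
      -deriv (deriv (deriv (deriv
        (fun t => deltaFun A x y t / pZ (pZ A) x y t)))) z := by
  have hneg : ∀ f : ℝ → ℝ, (deriv fun t => -f t) = fun t => -deriv f t :=
    fun f => funext fun t => deriv.neg
  have h0 : (fun t => fFun A x y t) =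
      fun t => -(deltaFun A x y t / pZ (pZ A) x y t) := by
    funext t; exact neg_div _ _
  show deriv (deriv (deriv (deriv (fun t => fFun A x y t)))) z = _
  rw [h0]
  simp only [hneg]

lemma key_iff {U : Set E3} (hU : IsOpen U) (hA : ContDiff ℝ ∞ (unc A))
    (hA'' : ∀ v ∈ U, pZ (pZ A) v.1 v.2.1 v.2.2 ≠ 0)
    {x y z : ℝ} (hv : (x, y, z) ∈ U) :
    (DeltaDet A x y z = 0 ↔ pZ (pZ (pZ (pZ (fFun A)))) x y z = 0) := by
  rw [key hU hA hA'' hv, pZ4_fFun, neg_eq_zero, mul_eq_zero]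
  have hqz : pZ (pZ A) x y z ≠ 0 := hA'' (x, y, z) hv
  simp [hqz]

end Aux0


open Aux0

/-- on an open set where `A'' ≠ 0`, the determinant `Δ(A)` vanishes at a
point iff the fourth `z`-derivative of `f = -δ(A)/A''` vanishes there; in particular
`Δ(A) ≡ 0` on `U` iff `f` is a polynomial of degree at most three in `z` on each
`z`-interval contained in `U`. -/
theorem stmt_0 (U : Set (ℝ × ℝ × ℝ)) (hU : IsOpen U) (A : ℝ → ℝ → ℝ → ℝ)
    (hA : ContDiff ℝ (⊤ : ℕ∞) (fun v : ℝ × ℝ × ℝ => A v.1 v.2.1 v.2.2))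
    (hA'' : ∀ v ∈ U, pZ (pZ A) v.1 v.2.1 v.2.2 ≠ 0) :
    (∀ v ∈ U, DeltaDet A v.1 v.2.1 v.2.2 = 0 ↔
        pZ (pZ (pZ (pZ (fFun A)))) v.1 v.2.1 v.2.2 = 0) ∧
    ((∀ v ∈ U, DeltaDet A v.1 v.2.1 v.2.2 = 0) ↔
      ∀ x y a b : ℝ, (∀ z ∈ Set.Ioo a b, (x, y, z) ∈ U) →
        ∃ c₀ c₁ c₂ c₃ : ℝ, ∀ z ∈ Set.Ioo a b,
          fFun A x y z = c₀ + c₁ * z + c₂ * z ^ 2 + c₃ * z ^ 3) := by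
  have hA' : ContDiff ℝ ∞ (unc A) := hA.of_le (by simp)
  have part1 : ∀ v ∈ U, (DeltaDet A v.1 v.2.1 v.2.2 = 0 ↔
      pZ (pZ (pZ (pZ (fFun A)))) v.1 v.2.1 v.2.2 = 0) := by
    rintro ⟨x, y, z⟩ hv
    exact key_iff hU hA' hA'' hv
  refine ⟨part1, ?_, ?_⟩
  · -- Δ ≡ 0 → cubic
    intro hΔ x y a b hseg
    by_cases hab : a < b
    · have hJo : IsOpen (Set.Ioo a b) := isOpen_Ioo
      have hJc : Convex ℝ (Set.Ioo a b) := convex_Ioo a b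
      have ht0 : (a + b) / 2 ∈ Set.Ioo a b := by
        rw [Set.mem_Ioo]; constructor <;> linarith
      have hqJ : ∀ t ∈ Set.Ioo a b, pZ (pZ A) x y t ≠ 0 :=
        fun t ht => hA'' (x, y, t) (hseg t ht)
      have hφ : ContDiffOn ℝ ∞ (fun t => fFun A x y t) (Set.Ioo a b) := by
        have h : (fun t => fFun A x y t) =
            fun t => -(deltaFun A x y t / pZ (pZ A) x y t) := by
          funext t; exact neg_div _ _
        rw [h]
        exact ((oneVar_d hA' x y).contDiffOn.div (oneVar_q hA' x y).contDiffOn hqJ).neg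
      have h4 : ∀ t ∈ Set.Ioo a b,
          deriv (deriv (deriv (deriv (fun t => fFun A x y t)))) t = 0 := by
        intro t ht
        exact (part1 (x, y, t) (hseg t ht)).1 (hΔ _ (hseg t ht))
      exact cubic_of_deriv4 hJo hJc hφ ht0 h4
    · exact ⟨0, 0, 0, 0, fun t ht => absurd ht (by simp [Set.Ioo_eq_empty hab])⟩
  · -- cubic → Δ ≡ 0
    intro hcubic
    rintro ⟨x, y, z⟩ hv
    obtain ⟨r, hr0, hball⟩ := Metric.isOpen_iff.1 hU _ hv
    have hseg : ∀ t ∈ Set.Ioo (z - r) (z + r), (x, y, t) ∈ U := by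
      intro t ht
      apply hball
      have hdist : dist ((x, y, t) : ℝ × ℝ × ℝ) (x, y, z) = dist t z := by
        simp [Prod.dist_eq, dist_nonneg]
      rw [Metric.mem_ball, hdist, Real.dist_eq, abs_lt]
      obtain ⟨h1, h2⟩ := ht
      constructor <;> linarith
    obtain ⟨c0, c1, c2, c3, hc⟩ := hcubic x y (z - r) (z + r) hseg
    have hzJ : z ∈ Set.Ioo (z - r) (z + r) := by
      rw [Set.mem_Ioo]; constructor <;> linarith
    refine (part1 (x, y, z) hv).2 ?_
    show deriv (deriv (deriv (deriv (fun t => fFun A x y t)))) z = 0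
    have hEq : Set.EqOn (fun t => fFun A x y t)
        (fun t => c0 + c1 * t + c2 * t ^ 2 + c3 * t ^ 3) (Set.Ioo (z - r) (z + r)) := hc
    have e4 := eqOn_deriv isOpen_Ioo (eqOn_deriv isOpen_Ioo
      (eqOn_deriv isOpen_Ioo (eqOn_deriv isOpen_Ioo hEq)))
    rw [e4 hzJ, deriv4_cubic]
end
end

section
/- Let a, b₁, b₂ : ℝ² → ℝ be continuously differentiable and define A(x,y,z) = a(x,y)·√(1+z²) + b₁(x,y) + b₂(x,y)·z. Then for all (x,y,z) ∈ ℝ³ and every real number f, the Rashevsky expression vanishes, A''(x,y,z)·f + z·A'_y + A'_x − A_y = 0, if and only if a·f + (a_x·z − a_y)·(1+z²) = (∂b₁/∂y − ∂b₂/∂x)·(1+z²)^{3/2}. In particular, the geodesic equation of the two-dimensional Randers metric L = a·√(ẋ²+ẏ²) + b₁ẋ + b₂ẏ is a·y'' + (a_x·y' − a_y)(1+y'²) = (∂b₁/∂y − ∂b₂/∂x)(1+y'²)^{3/2}, and its right-hand side is a polynomial in y' of degree at most three (the Douglas condition) exactly when ∂b₁/∂y − ∂b₂/∂x = 0. -/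
/-! Since `A' = a z/√(1+z²) + b₂` and `A'' = a (1+z²)^{-3/2}`, the `∂_y b₂` terms of `z A'_y`
and `A_y` cancel, and `(1+z²)^{3/2}` times the Rashevsky expression is
`a f + (aₓz − a_y)(1+z²) − (∂_y b₁ − ∂_x b₂)(1+z²)^{3/2}`.
For the Douglas condition, the even part of `K(1+w²)^{3/2} = c₀ + c₁w + c₂w² + c₃w³` is
`K(1+w²)^{3/2} = c₀ + c₂w²`; at `w² = 0, 3, 8` this reads `K = c₀`, `8K = c₀ + 3c₂`,
`27K = c₀ + 8c₂`, which forces `K = 0`. -/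

noncomputable section

/-- The associated fundamental function of a two-dimensional Randers metric in
isothermal coordinates: `A(x,y,z) = a·√(1+z²) + b₁ + b₂·z`. -/
def RandersA (a b₁ b₂ : ℝ → ℝ → ℝ) : ℝ → ℝ → ℝ → ℝ :=
  fun x y z => a x y * Real.sqrt (1 + z ^ 2) + b₁ x y + b₂ x y * z

lemma differentiableAt_slice_fst {g : ℝ → ℝ → ℝ} {x y : ℝ}
    (hg : DifferentiableAt ℝ (fun v : ℝ × ℝ => g v.1 v.2) (x, y)) :
    DifferentiableAt ℝ (fun u => g u y) x :=
  hg.comp (f := fun u : ℝ => (u, y)) x (by fun_prop)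

lemma differentiableAt_slice_snd {g : ℝ → ℝ → ℝ} {x y : ℝ}
    (hg : DifferentiableAt ℝ (fun v : ℝ × ℝ => g v.1 v.2) (x, y)) :
    DifferentiableAt ℝ (fun u => g x u) y :=
  hg.comp (f := fun u : ℝ => (x, u)) y (by fun_prop)

lemma rpow_three_halves_eq_sqrt_pow {t : ℝ} (ht : 0 ≤ t) : t ^ ((3 : ℝ) / 2) = √t ^ 3 := by
  rw [Real.sqrt_eq_rpow, ← Real.rpow_mul_natCast ht]
  norm_num

lemma hasDerivAt_sqrt_one_add_sq (z : ℝ) :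
    HasDerivAt (fun t : ℝ => √(1 + t ^ 2)) (z / √(1 + z ^ 2)) z := by
  convert ((hasDerivAt_pow 2 z).const_add 1).sqrt (by positivity) using 1
  field_simp
  ring

lemma hasDerivAt_div_sqrt_one_add_sq (z : ℝ) :
    HasDerivAt (fun t : ℝ => t / √(1 + t ^ 2)) (1 / √(1 + z ^ 2) ^ 3) z := by
  have hs : 0 < √(1 + z ^ 2) := by positivity
  have hsq : √(1 + z ^ 2) ^ 2 = 1 + z ^ 2 := Real.sq_sqrt (by positivity)
  refine ((hasDerivAt_id' z).fun_div (hasDerivAt_sqrt_one_add_sq z) hs.ne').congr_deriv ?_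
  field_simp
  linear_combination hsq

section Randers

variable (a b₁ b₂ : ℝ → ℝ → ℝ)

lemma pZ_randersA (x y z : ℝ) :
    pZ (RandersA a b₁ b₂) x y z = a x y * (z / √(1 + z ^ 2)) + b₂ x y := by
  unfold pZ RandersA
  have h := (((hasDerivAt_sqrt_one_add_sq z).const_mul (a x y)).add_const (b₁ x y)).fun_add
    ((hasDerivAt_id' z).const_mul (b₂ x y))
  simpa using h.deriv

lemma pZ_pZ_randersA (x y z : ℝ) :
    pZ (pZ (RandersA a b₁ b₂)) x y z = a x y * (1 / √(1 + z ^ 2) ^ 3) := by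
  show deriv (fun t => pZ (RandersA a b₁ b₂) x y t) z = _
  simp only [pZ_randersA]
  exact (((hasDerivAt_div_sqrt_one_add_sq z).const_mul (a x y)).add_const (b₂ x y)).deriv

variable {a b₁ b₂} {x y : ℝ}

lemma pX_pZ_randersA (ha : DifferentiableAt ℝ (fun v : ℝ × ℝ => a v.1 v.2) (x, y))
    (hb₂ : DifferentiableAt ℝ (fun v : ℝ × ℝ => b₂ v.1 v.2) (x, y)) (z : ℝ) :
    pX (pZ (RandersA a b₁ b₂)) x y z
      = deriv (fun u => a u y) x * (z / √(1 + z ^ 2)) + deriv (fun u => b₂ u y) x := by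
  simp only [pX, pZ_randersA]
  exact (((differentiableAt_slice_fst ha).hasDerivAt.mul_const _).add
    (differentiableAt_slice_fst hb₂).hasDerivAt).deriv

lemma pY_pZ_randersA (ha : DifferentiableAt ℝ (fun v : ℝ × ℝ => a v.1 v.2) (x, y))
    (hb₂ : DifferentiableAt ℝ (fun v : ℝ × ℝ => b₂ v.1 v.2) (x, y)) (z : ℝ) :
    pY (pZ (RandersA a b₁ b₂)) x y z
      = deriv (fun u => a x u) y * (z / √(1 + z ^ 2)) + deriv (fun u => b₂ x u) y := by
  simp only [pY, pZ_randersA]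
  exact (((differentiableAt_slice_snd ha).hasDerivAt.mul_const _).add
    (differentiableAt_slice_snd hb₂).hasDerivAt).deriv

lemma pY_randersA (ha : DifferentiableAt ℝ (fun v : ℝ × ℝ => a v.1 v.2) (x, y))
    (hb₁ : DifferentiableAt ℝ (fun v : ℝ × ℝ => b₁ v.1 v.2) (x, y))
    (hb₂ : DifferentiableAt ℝ (fun v : ℝ × ℝ => b₂ v.1 v.2) (x, y)) (z : ℝ) :
    pY (RandersA a b₁ b₂) x y z
      = deriv (fun u => a x u) y * √(1 + z ^ 2) + deriv (fun u => b₁ x u) y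
        + deriv (fun u => b₂ x u) y * z :=
  ((((differentiableAt_slice_snd ha).hasDerivAt.mul_const _).add
    (differentiableAt_slice_snd hb₁).hasDerivAt).add
    ((differentiableAt_slice_snd hb₂).hasDerivAt.mul_const z)).deriv

theorem rashevsky_randersA (ha : DifferentiableAt ℝ (fun v : ℝ × ℝ => a v.1 v.2) (x, y))
    (hb₁ : DifferentiableAt ℝ (fun v : ℝ × ℝ => b₁ v.1 v.2) (x, y))
    (hb₂ : DifferentiableAt ℝ (fun v : ℝ × ℝ => b₂ v.1 v.2) (x, y)) (z f : ℝ) :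
    pZ (pZ (RandersA a b₁ b₂)) x y z * f + z * pY (pZ (RandersA a b₁ b₂)) x y z
        + pX (pZ (RandersA a b₁ b₂)) x y z - pY (RandersA a b₁ b₂) x y z
      = (a x y * f + (deriv (fun u => a u y) x * z - deriv (fun u => a x u) y) * (1 + z ^ 2)
          - (deriv (fun u => b₁ x u) y - deriv (fun u => b₂ u y) x)
            * (1 + z ^ 2) ^ ((3 : ℝ) / 2)) / (1 + z ^ 2) ^ ((3 : ℝ) / 2) := by
  rw [pZ_pZ_randersA, pY_pZ_randersA ha hb₂, pX_pZ_randersA ha hb₂, pY_randersA ha hb₁ hb₂,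
    rpow_three_halves_eq_sqrt_pow (by positivity)]
  have hs : 0 < √(1 + z ^ 2) := by positivity
  have hsq : √(1 + z ^ 2) ^ 2 = 1 + z ^ 2 := Real.sq_sqrt (by positivity)
  set s := √(1 + z ^ 2)
  field_simp
  linear_combination
    (deriv (fun u => a u y) x * z - deriv (fun u => a x u) y * (1 + s ^ 2)) * hsq

end Randers

theorem mul_rpow_three_halves_eq_cubic_iff (K : ℝ) :
    (∃ c₀ c₁ c₂ c₃ : ℝ, ∀ w : ℝ,
        K * (1 + w ^ 2) ^ ((3 : ℝ) / 2) = c₀ + c₁ * w + c₂ * w ^ 2 + c₃ * w ^ 3) ↔ K = 0 := by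
  refine ⟨fun ⟨c₀, c₁, c₂, c₃, h⟩ => ?_, fun hK => ⟨0, 0, 0, 0, fun w => by simp [hK]⟩⟩
  have even_part (w n : ℝ) (hn : 0 ≤ n) (hwn : 1 + w ^ 2 = n ^ 2) :
      K * n ^ 3 = c₀ + c₂ * w ^ 2 := by
    have hpow : (1 + w ^ 2) ^ ((3 : ℝ) / 2) = n ^ 3 := by
      rw [rpow_three_halves_eq_sqrt_pow (by positivity), hwn, Real.sqrt_sq hn]
    have h_pos := h w
    have h_neg := h (-w)
    rw [hpow] at h_pos
    rw [neg_sq, hpow] at h_neg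
    linear_combination (h_pos + h_neg) / 2
  have h₀ := even_part 0 1 zero_le_one (by norm_num)
  have h₃ := even_part √3 2 zero_le_two (by norm_num)
  have h₈ := even_part √8 3 zero_le_three (by norm_num)
  norm_num at h₀ h₃ h₈
  linarith

/-- for the Randers metric `L = a·√(ẋ²+ẏ²) + b₁ẋ + b₂ẏ`, the Rashevsky
expression in `f` vanishes iff `a·f + (aₓz − a_y)(1+z²) = (∂b₁/∂y − ∂b₂/∂x)(1+z²)^{3/2}`
(the geodesic equation); and the right-hand side is a polynomial of degree at most three
(the Douglas condition) exactly when `∂b₁/∂y − ∂b₂/∂x = 0`. -/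
theorem stmt_6 (a b₁ b₂ : ℝ → ℝ → ℝ)
    (ha : ContDiff ℝ 1 (fun v : ℝ × ℝ => a v.1 v.2))
    (hb₁ : ContDiff ℝ 1 (fun v : ℝ × ℝ => b₁ v.1 v.2))
    (hb₂ : ContDiff ℝ 1 (fun v : ℝ × ℝ => b₂ v.1 v.2)) :
    ∀ x y z f : ℝ,
      (pZ (pZ (RandersA a b₁ b₂)) x y z * f + z * pY (pZ (RandersA a b₁ b₂)) x y z
          + pX (pZ (RandersA a b₁ b₂)) x y z - pY (RandersA a b₁ b₂) x y z = 0 ↔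
        a x y * f + (deriv (fun u => a u y) x * z - deriv (fun u => a x u) y) * (1 + z ^ 2)
          = (deriv (fun u => b₁ x u) y - deriv (fun u => b₂ u y) x)
              * (1 + z ^ 2) ^ ((3 : ℝ) / 2)) ∧
      ((∃ c₀ c₁ c₂ c₃ : ℝ, ∀ w : ℝ,
          (deriv (fun u => b₁ x u) y - deriv (fun u => b₂ u y) x)
              * (1 + w ^ 2) ^ ((3 : ℝ) / 2)
            = c₀ + c₁ * w + c₂ * w ^ 2 + c₃ * w ^ 3) ↔
        deriv (fun u => b₁ x u) y - deriv (fun u => b₂ u y) x = 0) := by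
  intro x y z f
  refine ⟨?_, mul_rpow_three_halves_eq_cubic_iff _⟩
  have hpow : (1 + z ^ 2) ^ ((3 : ℝ) / 2) ≠ 0 := by positivity
  rw [rashevsky_randersA (ha.differentiable one_ne_zero _) (hb₁.differentiable one_ne_zero _)
    (hb₂.differentiable one_ne_zero _), div_eq_zero_iff, or_iff_left hpow, sub_eq_zero]
end
end

section
/- Let B ≠ 0, C ∈ ℝ, c ≠ 0, and let ω : I → ℝ be twice differentiable on an open interval I on which Bz + C ≠ 0, with ω'(z) = c·exp(−1/(Bz+C)) for all z ∈ I. Define A(x,y,z) = ω(z)/x for x ≠ 0. Then for all x ≠ 0, y ∈ ℝ, z ∈ I, the Rashevsky identity A''(x,y,z)·f(x,z) + z·A'_y + A'_x − A_y = 0 holds with f(x,z) = (Bz+C)²/(Bx); that is, the equation y'' = (1/(Bx))·(By' + C)² is the geodesic equation of the Finsler metric with associated fundamental function A = ω(z)/x. -/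
noncomputable section

/-- The associated fundamental function `A(x,y,z) = ω(z)/x`. -/
def Aom (ω : ℝ → ℝ) : ℝ → ℝ → ℝ → ℝ := fun x _y z => ω z / x

/-!
For `A = ω(z)/x` the form reduces to `(ω''(z)·f − ω'(z)/x)/x`, since `A` does not depend on `y`.
Differentiating `ω' = c·exp(−1/(Bz+C))` gives `ω'' = ω'·B/(Bz+C)²`, and with
`f = (Bz+C)²/(Bx)` the bracket vanishes.
-/

theorem pZ_Aom (ω : ℝ → ℝ) : pZ (Aom ω) = Aom (deriv ω) := by
  funext x y z
  exact deriv_div_const x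

theorem pY_Aom (ω : ℝ → ℝ) : pY (Aom ω) = 0 := by
  funext x y z
  exact deriv_const y (ω z / x)

-- Holds also at `x = 0`, where both sides are junk `0` (`deriv_inv` needs no hypothesis).
theorem pX_Aom (ω : ℝ → ℝ) (x y z : ℝ) : pX (Aom ω) x y z = -ω z / x ^ 2 := by
  simp only [pX, Aom, div_eq_mul_inv, deriv_const_mul_field, deriv_inv]
  ring

theorem rashevsky_Aom (ω : ℝ → ℝ) (f x y z : ℝ) :
    pZ (pZ (Aom ω)) x y z * f + z * pY (pZ (Aom ω)) x y z + pX (pZ (Aom ω)) x y z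
      - pY (Aom ω) x y z = (deriv (deriv ω) z * f - deriv ω z / x) / x := by
  simp only [pZ_Aom, pY_Aom, pX_Aom, Aom, Pi.zero_apply]
  ring

theorem hasDerivAt_exp_neg_inv_affine {B C z : ℝ} (hz : B * z + C ≠ 0) :
    HasDerivAt (fun t => Real.exp (-(1 / (B * t + C))))
      (Real.exp (-(1 / (B * z + C))) * (B / (B * z + C) ^ 2)) z := by
  have affine : HasDerivAt (fun t => B * t + C) B z := by
    simpa using ((hasDerivAt_id z).const_mul B).add_const C
  simp only [one_div]
  exact (affine.inv hz).neg.exp.congr_deriv (by simp only [Pi.neg_apply, Pi.inv_apply]; ring)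

theorem deriv_deriv_of_deriv_eq_exp {B C c : ℝ} {I : Set ℝ} (hI : IsOpen I) {ω : ℝ → ℝ}
    (hω : ∀ z ∈ I, deriv ω z = c * Real.exp (-(1 / (B * z + C)))) {z : ℝ} (hz : z ∈ I)
    (hBC : B * z + C ≠ 0) :
    deriv (deriv ω) z = deriv ω z * (B / (B * z + C) ^ 2) := by
  have local_eq : deriv ω =ᶠ[nhds z] fun t => c * Real.exp (-(1 / (B * t + C))) :=
    Filter.eventually_of_mem (hI.mem_nhds hz) hω
  rw [local_eq.deriv_eq, ((hasDerivAt_exp_neg_inv_affine hBC).const_mul c).deriv, hω z hz]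
  ring

theorem stmt_9_general (B C c : ℝ) (hB : B ≠ 0)
    (I : Set ℝ) (hI : IsOpen I)
    (hBC : ∀ z ∈ I, B * z + C ≠ 0)
    (ω : ℝ → ℝ)
    (hω : ∀ z ∈ I, deriv ω z = c * Real.exp (-(1 / (B * z + C)))) :
    ∀ x y z : ℝ, x ≠ 0 → z ∈ I →
      pZ (pZ (Aom ω)) x y z * ((B * z + C) ^ 2 / (B * x))
        + z * pY (pZ (Aom ω)) x y z + pX (pZ (Aom ω)) x y z - pY (Aom ω) x y z = 0 := by
  intro x y z hx hz
  have hu := hBC z hz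
  rw [rashevsky_Aom, deriv_deriv_of_deriv_eq_exp hI hω hz hu]
  field_simp
  ring

/-- if `ω'(z) = c·exp(−1/(Bz+C))` on an open interval `I` where
`Bz + C ≠ 0`, then `A = ω(z)/x` satisfies the Rashevsky identity with
`f(x,z) = (Bz+C)²/(Bx)`, i.e. `y'' = (1/(Bx))·(By'+C)²` is the geodesic equation of
the Finsler metric with associated fundamental function `A`. -/
theorem stmt_9 (B C c : ℝ) (hB : B ≠ 0) (hc : c ≠ 0)
    (I : Set ℝ) (hI : IsOpen I) (hIint : I.OrdConnected)
    (hBC : ∀ z ∈ I, B * z + C ≠ 0)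
    (ω : ℝ → ℝ)
    (hω1 : ∀ z ∈ I, DifferentiableAt ℝ ω z)
    (hω2 : ∀ z ∈ I, DifferentiableAt ℝ (deriv ω) z)
    (hω : ∀ z ∈ I, deriv ω z = c * Real.exp (-(1 / (B * z + C)))) :
    ∀ x y z : ℝ, x ≠ 0 → z ∈ I →
      pZ (pZ (Aom ω)) x y z * ((B * z + C) ^ 2 / (B * x))
        + z * pY (pZ (Aom ω)) x y z + pX (pZ (Aom ω)) x y z - pY (Aom ω) x y z = 0 :=
  stmt_9_general B C c hB I hI hBC ω hω
end
end

section
/- Let U : ℝ → ℝ be three times differentiable and satisfy U''' + 3(U−1)·U'' + U'² + 2(U−1)²·U' = 0 everywhere. Define R : (0,∞) → ℝ by R(Q) = U(log Q)/Q. Then R satisfies 3R'' + 7R·R' + 2R³ + Q·(R''' + 3R·R'' + R'² + 2R²·R') = 0 for all Q > 0. -/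
/-!
Writing `s = log Q`, the derivative of `Q ↦ W (log Q) / Q ^ n` is `(W' - n W)(log Q) / Q ^ (n + 1)`.
Iterating this three times expresses `R`, `R'`, `R''`, `R'''` as `Q⁻¹, Q⁻², Q⁻³, Q⁻⁴` times linear
combinations of `U, U', U'', U'''` at `log Q`; after multiplying by `Q³` the equation for `R` is exactly the
autonomous equation for `U`.
-/

open Real

theorem hasDerivAt_comp_log_div_pow {W : ℝ → ℝ} {w' Q : ℝ} (hQ : 0 < Q)
    (hW : HasDerivAt W w' (log Q)) (n : ℕ) :
    HasDerivAt (fun x => W (log x) / x ^ n) ((w' - n * W (log Q)) / Q ^ (n + 1)) Q := by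
  have h := (hW.comp Q (hasDerivAt_log hQ.ne')).div (hasDerivAt_pow n Q) (pow_ne_zero n hQ.ne')
  refine h.congr_deriv ?_
  rcases n with _ | n
  · field_simp
    ring
  · simp only [Function.comp_apply, Nat.add_sub_cancel]
    field_simp
    ring

theorem deriv_eq_of_eq_comp_log_div_pow {F W W' : ℝ → ℝ} (hW : ∀ s, HasDerivAt W (W' s) s)
    (n : ℕ) (hF : ∀ Q, 0 < Q → F Q = W (log Q) / Q ^ n) (Q : ℝ) (hQ : 0 < Q) :
    deriv F Q = (W' (log Q) - n * W (log Q)) / Q ^ (n + 1) := by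
  have hFeq : F =ᶠ[nhds Q] fun x => W (log x) / x ^ n :=
    Filter.eventually_of_mem (Ioi_mem_nhds hQ) fun x hx => hF x hx
  rw [hFeq.deriv_eq, (hasDerivAt_comp_log_div_pow hQ (hW (log Q)) n).deriv]

/-- if `U` is three times differentiable and satisfies
`U''' + 3(U−1)U'' + U'² + 2(U−1)²U' = 0` everywhere, then `R(Q) = U(log Q)/Q`
satisfies `3R'' + 7RR' + 2R³ + Q(R''' + 3RR'' + R'² + 2R²R') = 0` for all `Q > 0`. -/
theorem stmt_12 (U : ℝ → ℝ)
    (hU1 : Differentiable ℝ U)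
    (hU2 : Differentiable ℝ (deriv U))
    (hU3 : Differentiable ℝ (deriv (deriv U)))
    (hUode : ∀ s : ℝ, deriv (deriv (deriv U)) s + 3 * (U s - 1) * deriv (deriv U) s
      + (deriv U s) ^ 2 + 2 * (U s - 1) ^ 2 * deriv U s = 0)
    (R : ℝ → ℝ) (hR : ∀ Q : ℝ, 0 < Q → R Q = U (Real.log Q) / Q) :
    ∀ Q : ℝ, 0 < Q →
      3 * deriv (deriv R) Q + 7 * R Q * deriv R Q + 2 * R Q ^ 3
        + Q * (deriv (deriv (deriv R)) Q + 3 * R Q * deriv (deriv R) Q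
            + (deriv R Q) ^ 2 + 2 * R Q ^ 2 * deriv R Q) = 0 := by
  have hU1' s := (hU1 s).hasDerivAt
  have hU2' s := (hU2 s).hasDerivAt
  have hU3' s := (hU3 s).hasDerivAt
  have hR1 : ∀ Q, 0 < Q → deriv R Q = (deriv U (log Q) - U (log Q)) / Q ^ 2 := fun Q hQ => by
    rw [deriv_eq_of_eq_comp_log_div_pow hU1' 1 (by simpa using hR) Q hQ]
    push_cast
    ring
  have hR2 : ∀ Q, 0 < Q → deriv (deriv R) Q =
      (deriv (deriv U) (log Q) - 3 * deriv U (log Q) + 2 * U (log Q)) / Q ^ 3 := fun Q hQ => by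
    rw [deriv_eq_of_eq_comp_log_div_pow (fun s => (hU2' s).fun_sub (hU1' s)) 2 hR1 Q hQ]
    push_cast
    ring
  have hR3 : ∀ Q, 0 < Q → deriv (deriv (deriv R)) Q =
      (deriv (deriv (deriv U)) (log Q) - 6 * deriv (deriv U) (log Q) + 11 * deriv U (log Q)
        - 6 * U (log Q)) / Q ^ 4 := fun Q hQ => by
    rw [deriv_eq_of_eq_comp_log_div_pow
      (fun s => ((hU3' s).fun_sub ((hU2' s).const_mul 3)).fun_add ((hU1' s).const_mul 2)) 3 hR2 Q hQ]
    push_cast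
    ring
  intro Q hQ
  rw [hR Q hQ, hR1 Q hQ, hR2 Q hQ, hR3 Q hQ]
  set s := log Q
  calc _ = (deriv (deriv (deriv U)) s + 3 * (U s - 1) * deriv (deriv U) s
        + (deriv U s) ^ 2 + 2 * (U s - 1) ^ 2 * deriv U s) / Q ^ 3 := by
        field_simp
        ring
    _ = 0 := by rw [hUode, zero_div]
end

section
/- Let Y : ℝ → ℝ be twice differentiable and satisfy Y(z)·Y''(z) + Y'(z)² + 3z·Y'(z) + Y(z) + 2z² = 0 for all z ∈ ℝ. Let Z : I → ℝ be a differentiable function on an open interval I with Z'(t) = Y(Z(t)) for all t ∈ I. Then Z is three times differentiable and satisfies Z''' + 3Z·Z'' + Z'² + 2Z²·Z' = 0 on I. -/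
/-! Differentiating `Z' = Y ∘ Z` twice by the chain rule gives `Z'' = (Y' Y) ∘ Z` and
`Z''' = ((Y'' Y + Y'²) Y) ∘ Z`, so the left-hand side of the third-order equation is `Y(Z)` times
the second-order equation for `Y` evaluated at `Z`. -/

open Set

theorem HasDerivAt.of_eqOn_comp {𝕜 : Type*} [NontriviallyNormedField 𝕜] {F f h : 𝕜 → 𝕜}
    {U : Set 𝕜} {t h' f' : 𝕜} (hU : IsOpen U) (hF : EqOn F (h ∘ f) U) (ht : t ∈ U)
    (hh : HasDerivAt h h' (f t)) (hf : HasDerivAt f f' t) :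
    HasDerivAt F (h' * f') t :=
  (hh.comp t hf).congr_of_eventuallyEq (hF.eventuallyEq_of_mem (hU.mem_nhds ht))

theorem stmt_13_general (Y : ℝ → ℝ)
    (hY1 : Differentiable ℝ Y) (hY2 : Differentiable ℝ (deriv Y))
    (hYode : ∀ z : ℝ, Y z * deriv (deriv Y) z + (deriv Y z) ^ 2 + 3 * z * deriv Y z
      + Y z + 2 * z ^ 2 = 0)
    (I : Set ℝ) (hI : IsOpen I)
    (Z : ℝ → ℝ) (hZ : ∀ t ∈ I, DifferentiableAt ℝ Z t)
    (hZode : ∀ t ∈ I, deriv Z t = Y (Z t)) :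
    (∀ t ∈ I, DifferentiableAt ℝ (deriv Z) t ∧ DifferentiableAt ℝ (deriv (deriv Z)) t) ∧
    ∀ t ∈ I,
      deriv (deriv (deriv Z)) t + 3 * Z t * deriv (deriv Z) t + (deriv Z t) ^ 2
        + 2 * Z t ^ 2 * deriv Z t = 0 := by
  have hZ1 : ∀ t ∈ I, HasDerivAt Z (Y (Z t)) t := fun t ht =>
    hZode t ht ▸ (hZ t ht).hasDerivAt
  have hZ2 : ∀ t ∈ I, HasDerivAt (deriv Z) (deriv Y (Z t) * Y (Z t)) t := fun t ht =>
    .of_eqOn_comp hI hZode ht (hY1 _).hasDerivAt (hZ1 t ht)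
  have hZ3 : ∀ t ∈ I, HasDerivAt (deriv (deriv Z))
      ((deriv (deriv Y) (Z t) * Y (Z t) + deriv Y (Z t) * deriv Y (Z t)) * Y (Z t)) t :=
    fun t ht => .of_eqOn_comp (h := fun z => deriv Y z * Y z) hI (fun s hs => (hZ2 s hs).deriv)
      ht ((hY2 _).hasDerivAt.mul (hY1 _).hasDerivAt) (hZ1 t ht)
  refine ⟨fun t ht => ⟨(hZ2 t ht).differentiableAt, (hZ3 t ht).differentiableAt⟩, fun t ht => ?_⟩
  rw [(hZ3 t ht).deriv, (hZ2 t ht).deriv, hZode t ht]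
  linear_combination Y (Z t) * hYode (Z t)

/-- if `Y` is twice differentiable with
`Y·Y'' + Y'² + 3z·Y' + Y + 2z² = 0` everywhere, and `Z' = Y(Z)` on an open interval,
then `Z` is three times differentiable and `Z''' + 3ZZ'' + Z'² + 2Z²Z' = 0`. -/
theorem stmt_13 (Y : ℝ → ℝ)
    (hY1 : Differentiable ℝ Y) (hY2 : Differentiable ℝ (deriv Y))
    (hYode : ∀ z : ℝ, Y z * deriv (deriv Y) z + (deriv Y z) ^ 2 + 3 * z * deriv Y z
      + Y z + 2 * z ^ 2 = 0)
    (I : Set ℝ) (hI : IsOpen I) (hIint : I.OrdConnected)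
    (Z : ℝ → ℝ) (hZ : ∀ t ∈ I, DifferentiableAt ℝ Z t)
    (hZode : ∀ t ∈ I, deriv Z t = Y (Z t)) :
    (∀ t ∈ I, DifferentiableAt ℝ (deriv Z) t ∧ DifferentiableAt ℝ (deriv (deriv Z)) t) ∧
    ∀ t ∈ I,
      deriv (deriv (deriv Z)) t + 3 * Z t * deriv (deriv Z) t + (deriv Z t) ^ 2
        + 2 * Z t ^ 2 * deriv Z t = 0 :=
  stmt_13_general Y hY1 hY2 hYode I hI Z hZ hZode
end

section
/- Let V : ℝ → ℝ be twice differentiable. Define Y : (0,∞) → ℝ by Y(z) = z²·V(log z). Then for all z > 0: Y(z)·Y''(z) + Y'(z)² + 3z·Y'(z) + Y(z) + 2z² = z²·[V·V'' + V'² + 7V·V' + 3V' + 6V² + 7V + 2](log z). In particular, Y satisfies Y·Y'' + Y'² + 3zY' + Y + 2z² = 0 on (0,∞) if and only if V satisfies V·V'' + V'² + 7V·V' + 3V' + 6V² + 7V + 2 = 0 on ℝ. -/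
/-!
Writing `Y z = z ^ (k + 1) * W (log z)`, one differentiation gives `Y' z = z ^ k * (W' + (k + 1) W) (log z)`:
the substitution lowers the power of `z` by one and replaces `W` by a first-order expression in `W`.
Applying this with `k = 1`, `W = V` and then with `k = 0`, `W = 2V + V'` gives `Y' = z (2V + V')(log z)` and
`Y'' = (2V + 3V' + V'')(log z)`, after which the identity is a polynomial one. Since `log` maps `(0, ∞)` onto
`ℝ` and `z² ≠ 0`, the two differential equations are equivalent.
-/

open Real Set

theorem hasDerivAt_pow_succ_mul_comp_log (k : ℕ) {W : ℝ → ℝ} {z : ℝ} (hz : 0 < z)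
    (hW : DifferentiableAt ℝ W (log z)) :
    HasDerivAt (fun x => x ^ (k + 1) * W (log x))
      (z ^ k * ((k + 1) * W (log z) + deriv W (log z))) z := by
  refine ((hasDerivAt_pow (k + 1) z).mul
    (hW.hasDerivAt.comp z (hasDerivAt_log hz.ne'))).congr_deriv ?_
  simp only [add_tsub_cancel_right, Nat.cast_add, Nat.cast_one, Function.comp_apply]
  field_simp
  ring

theorem deriv_of_eqOn_pow_succ_mul_comp_log (k : ℕ) {W Y : ℝ → ℝ}
    (hY : ∀ z, 0 < z → Y z = z ^ (k + 1) * W (log z)) {z : ℝ} (hz : 0 < z)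
    (hW : DifferentiableAt ℝ W (log z)) :
    deriv Y z = z ^ k * ((k + 1) * W (log z) + deriv W (log z)) :=
  ((hasDerivAt_pow_succ_mul_comp_log k hz hW).congr_of_eventuallyEq
    (Filter.eventuallyEq_of_mem (Ioi_mem_nhds hz) hY)).deriv

/-- for twice differentiable `V` and `Y(z) = z²·V(log z)` on `(0,∞)`,
`Y·Y'' + Y'² + 3zY' + Y + 2z² = z²·(V·V'' + V'² + 7VV' + 3V' + 6V² + 7V + 2)(log z)`;
in particular `Y` solves its equation on `(0,∞)` iff `V` solves
`V·V'' + V'² + 7VV' + 3V' + 6V² + 7V + 2 = 0` on `ℝ`. -/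
theorem stmt_15 (V : ℝ → ℝ)
    (hV1 : Differentiable ℝ V) (hV2 : Differentiable ℝ (deriv V))
    (Y : ℝ → ℝ) (hY : ∀ z : ℝ, 0 < z → Y z = z ^ 2 * V (Real.log z)) :
    (∀ z : ℝ, 0 < z →
      Y z * deriv (deriv Y) z + (deriv Y z) ^ 2 + 3 * z * deriv Y z + Y z + 2 * z ^ 2
        = z ^ 2 * (V (Real.log z) * deriv (deriv V) (Real.log z)
            + (deriv V (Real.log z)) ^ 2
            + 7 * V (Real.log z) * deriv V (Real.log z) + 3 * deriv V (Real.log z)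
            + 6 * V (Real.log z) ^ 2 + 7 * V (Real.log z) + 2)) ∧
    ((∀ z : ℝ, 0 < z →
        Y z * deriv (deriv Y) z + (deriv Y z) ^ 2 + 3 * z * deriv Y z + Y z + 2 * z ^ 2 = 0)
      ↔ (∀ s : ℝ, V s * deriv (deriv V) s + (deriv V s) ^ 2 + 7 * V s * deriv V s
          + 3 * deriv V s + 6 * V s ^ 2 + 7 * V s + 2 = 0)) := by
  set W : ℝ → ℝ := fun s => 2 * V s + deriv V s
  have hW : Differentiable ℝ W := (hV1.const_mul 2).add hV2
  have hW' (s : ℝ) : deriv W s = 2 * deriv V s + deriv (deriv V) s :=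
    (((hV1 s).hasDerivAt.const_mul 2).add (hV2 s).hasDerivAt).deriv
  have hY1 (z : ℝ) (hz : 0 < z) : deriv Y z = z ^ 1 * W (log z) := by
    rw [deriv_of_eqOn_pow_succ_mul_comp_log 1 hY hz (hV1 _)]
    ring
  have hY2 (z : ℝ) (hz : 0 < z) :
      deriv (deriv Y) z = 2 * V (log z) + 3 * deriv V (log z) + deriv (deriv V) (log z) := by
    rw [deriv_of_eqOn_pow_succ_mul_comp_log 0 hY1 hz (hW _), hW']
    ring
  have key : ∀ z : ℝ, 0 < z →
      Y z * deriv (deriv Y) z + (deriv Y z) ^ 2 + 3 * z * deriv Y z + Y z + 2 * z ^ 2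
        = z ^ 2 * (V (log z) * deriv (deriv V) (log z) + (deriv V (log z)) ^ 2
            + 7 * V (log z) * deriv V (log z) + 3 * deriv V (log z)
            + 6 * V (log z) ^ 2 + 7 * V (log z) + 2) := by
    intro z hz
    rw [hY z hz, hY1 z hz, hY2 z hz]
    ring
  refine ⟨key, fun h s => ?_, fun h z hz => by rw [key z hz, h, mul_zero]⟩
  have hs := (key _ (exp_pos s)).symm.trans (h _ (exp_pos s))
  rw [log_exp] at hs
  exact (mul_eq_zero.mp hs).resolve_left (pow_ne_zero _ (exp_pos s).ne')
end

section
/- Let k ≠ 0, b, r be real constants and set m = 1 + (b+1)/k, n = 1/k², l = b(r−1)/k², t = b(k+1)/k², s = 1 + 1/k. Let Y : J → ℝ be twice differentiable on an open interval J with x ≠ 0 and Y(x) ≠ x for all x ∈ J, and suppose Y satisfies k·(Y − x)·Y'' + k·Y'² − (1/x)·(k·Y − (b+1)·x)·Y' − Y/x + (x²·Y + b·(Y − r·x))/(k·(Y − x)) = 0 on J. Then the function V(x) = 1/(Y(x) − x) is twice differentiable and satisfies on J: V'' = (3/V)·V'² + (1/x − m·V)·V' + (n·x³ − l·x)·V⁴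 + (n·x² + t)·V³ − (s/x)·V². -/
/-!
With `w = Y - x` and `V = 1/w` one has `V' = (1 - Y')/w²` and `V'' = (2(Y' - 1)² - w Y'')/w³`.
Solving the Lorenz equation for `Y''` (its coefficient `k w` does not vanish) and substituting
`w = 1/V`, `Y' = 1 - V'/V²` turns `V''` into the stated rational expression in `x, V, V'`.
-/

theorem hasDerivAt_inv_sub_id {Y : ℝ → ℝ} {x : ℝ} (hY : DifferentiableAt ℝ Y x)
    (hYx : Y x ≠ x) :
    HasDerivAt (fun y => (Y y - y)⁻¹) ((1 - deriv Y x) / (Y x - x) ^ 2) x := by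
  have hw : HasDerivAt (fun y => Y y - y) (deriv Y x - 1) x :=
    hY.hasDerivAt.sub (hasDerivAt_id x)
  exact (hw.fun_inv (sub_ne_zero.mpr hYx)).congr_deriv (by ring)

theorem hasDerivAt_deriv_inv_sub_id {Y : ℝ → ℝ} {J : Set ℝ} (hJ : IsOpen J)
    (hY : ∀ y ∈ J, DifferentiableAt ℝ Y y) (hYx : ∀ y ∈ J, Y y ≠ y) {x : ℝ} (hx : x ∈ J)
    (hY' : DifferentiableAt ℝ (deriv Y) x) :
    HasDerivAt (deriv fun y => (Y y - y)⁻¹)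
      ((2 * (deriv Y x - 1) ^ 2 - (Y x - x) * deriv (deriv Y) x) / (Y x - x) ^ 3) x := by
  have hderiv : deriv (fun y => (Y y - y)⁻¹) =ᶠ[nhds x]
      fun y => (1 - deriv Y y) / (Y y - y) ^ 2 := by
    filter_upwards [hJ.mem_nhds hx] with y hy
    exact (hasDerivAt_inv_sub_id (hY y hy) (hYx y hy)).deriv
  have hw0 : Y x - x ≠ 0 := sub_ne_zero.mpr (hYx x hx)
  have hw : HasDerivAt (fun y => Y y - y) (deriv Y x - 1) x :=
    (hY x hx).hasDerivAt.sub (hasDerivAt_id x)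
  have hquot := (hY'.hasDerivAt.const_sub 1).div (hw.fun_pow 2) (pow_ne_zero 2 hw0)
  refine (hquot.congr_of_eventuallyEq hderiv).congr_deriv ?_
  field_simp
  ring

theorem lorenz_reciprocal_identity {k b r x y y₁ y₂ v v₁ : ℝ} (hk : k ≠ 0) (hx : x ≠ 0)
    (hyx : y - x ≠ 0)
    (hode : k * (y - x) * y₂ + k * y₁ ^ 2 - (1 / x) * (k * y - (b + 1) * x) * y₁ - y / x
      + (x ^ 2 * y + b * (y - r * x)) / (k * (y - x)) = 0)
    (hv : v = 1 / (y - x)) (hv₁ : v₁ = (1 - y₁) / (y - x) ^ 2) :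
    (2 * (y₁ - 1) ^ 2 - (y - x) * y₂) / (y - x) ^ 3
      = (3 / v) * v₁ ^ 2 + (1 / x - (1 + (b + 1) / k) * v) * v₁
        + (1 / k ^ 2 * x ^ 3 - b * (r - 1) / k ^ 2 * x) * v ^ 4
        + (1 / k ^ 2 * x ^ 2 + b * (k + 1) / k ^ 2) * v ^ 3 - ((1 + 1 / k) / x) * v ^ 2 := by
  have hy₂ : y₂ = (-(k * y₁ ^ 2) + (1 / x) * (k * y - (b + 1) * x) * y₁ + y / x
      - (x ^ 2 * y + b * (y - r * x)) / (k * (y - x))) / (k * (y - x)) := by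
    field_simp at hode ⊢
    linarith
  subst hy₂ hv hv₁
  field_simp
  ring

theorem stmt_18_general (k b r m n l t s : ℝ) (hk : k ≠ 0)
    (hm : m = 1 + (b + 1) / k) (hn : n = 1 / k ^ 2) (hl : l = b * (r - 1) / k ^ 2)
    (ht : t = b * (k + 1) / k ^ 2) (hs : s = 1 + 1 / k)
    (J : Set ℝ) (hJ : IsOpen J)
    (Y : ℝ → ℝ)
    (hY1 : ∀ x ∈ J, DifferentiableAt ℝ Y x)
    (hY2 : ∀ x ∈ J, DifferentiableAt ℝ (deriv Y) x)
    (hx0 : ∀ x ∈ J, x ≠ 0) (hYx : ∀ x ∈ J, Y x ≠ x)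
    (hode : ∀ x ∈ J,
      k * (Y x - x) * deriv (deriv Y) x + k * (deriv Y x) ^ 2
        - (1 / x) * (k * Y x - (b + 1) * x) * deriv Y x - Y x / x
        + (x ^ 2 * Y x + b * (Y x - r * x)) / (k * (Y x - x)) = 0)
    (V : ℝ → ℝ) (hV : ∀ x : ℝ, V x = 1 / (Y x - x)) :
    (∀ x ∈ J, DifferentiableAt ℝ V x ∧ DifferentiableAt ℝ (deriv V) x) ∧
    ∀ x ∈ J,
      deriv (deriv V) x
        = (3 / V x) * (deriv V x) ^ 2 + (1 / x - m * V x) * deriv V x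
          + (n * x ^ 3 - l * x) * V x ^ 4 + (n * x ^ 2 + t) * V x ^ 3
          - (s / x) * V x ^ 2 := by
  obtain rfl : V = fun y => (Y y - y)⁻¹ := funext fun y => (hV y).trans (one_div _)
  have hV' x (hx : x ∈ J) := hasDerivAt_inv_sub_id (hY1 x hx) (hYx x hx)
  have hV'' x (hx : x ∈ J) := hasDerivAt_deriv_inv_sub_id hJ hY1 hYx hx (hY2 x hx)
  refine ⟨fun x hx => ⟨(hV' x hx).differentiableAt, (hV'' x hx).differentiableAt⟩,
    fun x hx => ?_⟩
  subst hm hn hl ht hs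
  rw [(hV'' x hx).deriv, (hV' x hx).deriv]
  exact lorenz_reciprocal_identity hk (hx0 x hx) (sub_ne_zero.mpr (hYx x hx)) (hode x hx)
    (one_div _).symm rfl

/-- the point transformation `v = 1/(y − x)` carries the second-order
equation obtained from the Lorenz system into
`v'' = (3/v)v'² + (1/x − mv)v' + (nx³ − lx)v⁴ + (nx² + t)v³ − (s/x)v²`,
with `m = 1+(b+1)/k`, `n = 1/k²`, `l = b(r−1)/k²`, `t = b(k+1)/k²`, `s = 1+1/k`. -/
theorem stmt_18 (k b r m n l t s : ℝ) (hk : k ≠ 0)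
    (hm : m = 1 + (b + 1) / k) (hn : n = 1 / k ^ 2) (hl : l = b * (r - 1) / k ^ 2)
    (ht : t = b * (k + 1) / k ^ 2) (hs : s = 1 + 1 / k)
    (J : Set ℝ) (hJ : IsOpen J) (hJint : J.OrdConnected)
    (Y : ℝ → ℝ)
    (hY1 : ∀ x ∈ J, DifferentiableAt ℝ Y x)
    (hY2 : ∀ x ∈ J, DifferentiableAt ℝ (deriv Y) x)
    (hx0 : ∀ x ∈ J, x ≠ 0) (hYx : ∀ x ∈ J, Y x ≠ x)
    (hode : ∀ x ∈ J,
      k * (Y x - x) * deriv (deriv Y) x + k * (deriv Y x) ^ 2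
        - (1 / x) * (k * Y x - (b + 1) * x) * deriv Y x - Y x / x
        + (x ^ 2 * Y x + b * (Y x - r * x)) / (k * (Y x - x)) = 0)
    (V : ℝ → ℝ) (hV : ∀ x : ℝ, V x = 1 / (Y x - x)) :
    (∀ x ∈ J, DifferentiableAt ℝ V x ∧ DifferentiableAt ℝ (deriv V) x) ∧
    ∀ x ∈ J,
      deriv (deriv V) x
        = (3 / V x) * (deriv V x) ^ 2 + (1 / x - m * V x) * deriv V x
          + (n * x ^ 3 - l * x) * V x ^ 4 + (n * x ^ 2 + t) * V x ^ 3
          - (s / x) * V x ^ 2 :=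
  stmt_18_general k b r m n l t s hk hm hn hl ht hs J hJ Y hY1 hY2 hx0 hYx hode V hV
end

section
/- Let p ∉ {0, −1} and m be real constants, and let a, b : (0,∞) × (0,∞) → ℝ be continuously differentiable with a(x,y) ≠ 0 everywhere, satisfying for all x, y > 0: a_y(x,y)/a(x,y) = −3/y and (1−p)·a_x(x,y) − (1+p)·b_y(x,y) = p·a(x,y)·(1/x − m·y). Then there exist a differentiable function f : (0,∞) → ℝ and a function g : (0,∞) → ℝ such that for all x, y > 0: a(x,y) = f(x)/y³ and b(x,y) = ((p−1)/(2(p+1)))·f'(x)/y² + (p/(p+1))·(1/(2xy) − m)·f(x)/y + g(x). -/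
/-!
The first equation says that `y ↦ a(x,y)·y³` has zero `y`-derivative, so `a = f(x)/y³` with
`f(x) = a(x,1)`. Substituting this into the second equation gives
`b_y = A(x)/y³ + B(x)/y²`, whose antiderivatives in `y` are `-A/(2y²) - B/y + g(x)`.
-/

open Set

section Curry

variable {𝕜 E F G : Type*} [NontriviallyNormedField 𝕜] [NormedAddCommGroup E] [NormedSpace 𝕜 E]
  [NormedAddCommGroup F] [NormedSpace 𝕜 F] [NormedAddCommGroup G] [NormedSpace 𝕜 G]
  {f : E → F → G} {x : E} {y : F}

lemma DifferentiableAt.curry_left (h : DifferentiableAt 𝕜 (fun v : E × F => f v.1 v.2) (x, y)) :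
    DifferentiableAt 𝕜 (fun u => f u y) x := by
  have hy : DifferentiableAt 𝕜 (fun u : E => (u, y)) x :=
    differentiableAt_id.prodMk (differentiableAt_const y)
  exact h.comp x hy

lemma DifferentiableAt.curry_right (h : DifferentiableAt 𝕜 (fun v : E × F => f v.1 v.2) (x, y)) :
    DifferentiableAt 𝕜 (f x) y := by
  have hx : DifferentiableAt 𝕜 (fun u : F => (x, u)) y :=
    (differentiableAt_const x).prodMk differentiableAt_id
  exact h.comp y hx

end Curry

lemma eq_at_one_of_hasDerivAt_zero {h : ℝ → ℝ} (hh : ∀ y > 0, HasDerivAt h 0 y)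
    {y : ℝ} (hy : 0 < y) : h y = h 1 :=
  isOpen_Ioi.is_const_of_deriv_eq_zero isPreconnected_Ioi
    (fun z hz => (hh z hz).differentiableAt.differentiableWithinAt)
    (fun z hz => (hh z hz).deriv) (mem_Ioi.2 hy) (mem_Ioi.2 one_pos)

lemma eq_div_pow_of_hasDerivAt (n : ℕ) {h : ℝ → ℝ}
    (hh : ∀ y > 0, HasDerivAt h (-n * h y / y) y) {y : ℝ} (hy : 0 < y) :
    h y = h 1 / y ^ n := by
  have hconst : ∀ z > 0, HasDerivAt (fun u => h u * u ^ n) 0 z := fun z hz => by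
    refine ((hh z hz).mul (hasDerivAt_pow n z)).congr_deriv ?_
    rcases n with _ | n
    · simp
    · simp only [Nat.add_sub_cancel]
      field_simp
      push_cast
      ring
  have := eq_at_one_of_hasDerivAt_zero hconst hy
  rw [one_pow, mul_one] at this
  rw [← this, mul_div_cancel_right₀ _ (pow_ne_zero n hy.ne')]

lemma eq_div_pow_of_logDeriv_eq (n : ℕ) {h : ℝ → ℝ} (hd : ∀ y > 0, DifferentiableAt ℝ h y)
    (h0 : ∀ y > 0, h y ≠ 0) (hlog : ∀ y > 0, logDeriv h y = -n / y) {y : ℝ} (hy : 0 < y) :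
    h y = h 1 / y ^ n := by
  refine eq_div_pow_of_hasDerivAt n (fun z hz => (hd z hz).hasDerivAt.congr_deriv ?_) hy
  have := hlog z hz
  rw [logDeriv_apply, div_eq_div_iff (h0 z hz) hz.ne'] at this
  field_simp
  linarith

lemma eq_of_hasDerivAt_div_cube_add_div_sq {φ : ℝ → ℝ} {A B : ℝ}
    (hφ : ∀ y > 0, HasDerivAt φ (A / y ^ 3 + B / y ^ 2) y) {y : ℝ} (hy : 0 < y) :
    φ y = φ 1 + A / 2 + B - A / (2 * y ^ 2) - B / y := by
  have hconst : ∀ z > 0, HasDerivAt (fun u => φ u + A / (2 * u ^ 2) + B / u) 0 z := fun z hz => by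
    have hsq : HasDerivAt (fun u : ℝ => 2 * u ^ 2) (2 * (2 * z)) z := by
      simpa using (hasDerivAt_pow 2 z).const_mul 2
    refine (((hφ z hz).add ((hasDerivAt_const z A).div hsq (by positivity))).add
      ((hasDerivAt_const z B).div (hasDerivAt_id z) hz.ne')).congr_deriv ?_
    simp only [id]
    field_simp
    ring
  have := eq_at_one_of_hasDerivAt_zero hconst hy
  norm_num at this
  linarith

theorem stmt_19_general (p m : ℝ) (hp1 : p ≠ -1)
    (a b : ℝ → ℝ → ℝ)
    (ha : ContDiffOn ℝ 1 (fun v : ℝ × ℝ => a v.1 v.2) (Set.Ioi 0 ×ˢ Set.Ioi 0))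
    (hb : ContDiffOn ℝ 1 (fun v : ℝ × ℝ => b v.1 v.2) (Set.Ioi 0 ×ˢ Set.Ioi 0))
    (ha0 : ∀ x > (0:ℝ), ∀ y > (0:ℝ), a x y ≠ 0)
    (heq1 : ∀ x > (0:ℝ), ∀ y > (0:ℝ), deriv (fun u => a x u) y / a x y = -3 / y)
    (heq2 : ∀ x > (0:ℝ), ∀ y > (0:ℝ),
      (1 - p) * deriv (fun u => a u y) x - (1 + p) * deriv (fun u => b x u) y
        = p * a x y * (1 / x - m * y)) :
    ∃ f g : ℝ → ℝ, (∀ x > (0:ℝ), DifferentiableAt ℝ f x) ∧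
      ∀ x > (0:ℝ), ∀ y > (0:ℝ),
        a x y = f x / y ^ 3 ∧
        b x y = ((p - 1) / (2 * (p + 1))) * deriv f x / y ^ 2
          + (p / (p + 1)) * (1 / (2 * x * y) - m) * f x / y + g x := by
  have hp : p + 1 ≠ 0 := fun h => hp1 (by linarith)
  have hquad : IsOpen (Ioi (0:ℝ) ×ˢ Ioi (0:ℝ)) := isOpen_Ioi.prod isOpen_Ioi
  have hda : ∀ x > (0:ℝ), ∀ y > (0:ℝ), DifferentiableAt ℝ (fun v : ℝ × ℝ => a v.1 v.2) (x, y) :=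
    fun x hx y hy => (ha.differentiableOn one_ne_zero).differentiableAt (hquad.mem_nhds ⟨hx, hy⟩)
  have hdb : ∀ x > (0:ℝ), ∀ y > (0:ℝ), DifferentiableAt ℝ (fun v : ℝ × ℝ => b v.1 v.2) (x, y) :=
    fun x hx y hy => (hb.differentiableOn one_ne_zero).differentiableAt (hquad.mem_nhds ⟨hx, hy⟩)
  set f : ℝ → ℝ := fun x => a x 1
  have ha_eq : ∀ x > (0:ℝ), ∀ y > (0:ℝ), a x y = f x / y ^ 3 := fun x hx y hy =>
    eq_div_pow_of_logDeriv_eq 3 (fun z hz => (hda x hx z hz).curry_right) (ha0 x hx)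
      (fun z hz => by exact_mod_cast heq1 x hx z hz) hy
  have hax : ∀ x > (0:ℝ), ∀ y > (0:ℝ), deriv (fun u => a u y) x = deriv f x / y ^ 3 := by
    intro x hx y hy
    have hloc : (fun u => a u y) =ᶠ[nhds x] (fun u => f u / y ^ 3) :=
      Filter.eventually_of_mem (isOpen_Ioi.mem_nhds hx) fun u hu => ha_eq u hu y hy
    rw [hloc.deriv_eq, deriv_div_const]
  set A : ℝ → ℝ := fun x => ((1 - p) * deriv f x - p * f x / x) / (p + 1)
  set B : ℝ → ℝ := fun x => p * m * f x / (p + 1)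
  have hb_eq : ∀ x > (0:ℝ), ∀ y > (0:ℝ),
      b x y = b x 1 + A x / 2 + B x - A x / (2 * y ^ 2) - B x / y := by
    intro x hx y hy
    refine eq_of_hasDerivAt_div_cube_add_div_sq (fun z hz => ?_) hy
    refine (hdb x hx z hz).curry_right.hasDerivAt.congr_deriv ?_
    have hbz : deriv (b x) z
        = ((1 - p) * (deriv f x / z ^ 3) - p * (f x / z ^ 3) * (1 / x - m * z)) / (p + 1) := by
      rw [eq_div_iff hp, ← hax x hx z hz, ← ha_eq x hx z hz, ← heq2 x hx z hz]
      ring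
    rw [hbz]
    simp only [A, B]
    field_simp
    ring
  refine ⟨f, fun x => b x 1 + A x / 2 + B x, fun x hx => (hda x hx 1 one_pos).curry_left,
    fun x hx y hy => ⟨ha_eq x hx y hy, ?_⟩⟩
  rw [hb_eq x hx y hy]
  simp only [A, B]
  field_simp
  ring

/-- if `a(x,y) ≠ 0` satisfies `a_y/a = −3/y` and
`(1−p)aₓ − (1+p)b_y = p·a·(1/x − my)` on `(0,∞)×(0,∞)` with `p ∉ {0,−1}`, then
`a(x,y) = f(x)/y³` and
`b(x,y) = ((p−1)/(2(p+1)))f'(x)/y² + (p/(p+1))(1/(2xy) − m)f(x)/y + g(x)`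
for some differentiable `f` and some `g`. -/
theorem stmt_19 (p m : ℝ) (hp0 : p ≠ 0) (hp1 : p ≠ -1)
    (a b : ℝ → ℝ → ℝ)
    (ha : ContDiffOn ℝ 1 (fun v : ℝ × ℝ => a v.1 v.2) (Set.Ioi 0 ×ˢ Set.Ioi 0))
    (hb : ContDiffOn ℝ 1 (fun v : ℝ × ℝ => b v.1 v.2) (Set.Ioi 0 ×ˢ Set.Ioi 0))
    (ha0 : ∀ x > (0:ℝ), ∀ y > (0:ℝ), a x y ≠ 0)
    (heq1 : ∀ x > (0:ℝ), ∀ y > (0:ℝ), deriv (fun u => a x u) y / a x y = -3 / y)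
    (heq2 : ∀ x > (0:ℝ), ∀ y > (0:ℝ),
      (1 - p) * deriv (fun u => a u y) x - (1 + p) * deriv (fun u => b x u) y
        = p * a x y * (1 / x - m * y)) :
    ∃ f g : ℝ → ℝ, (∀ x > (0:ℝ), DifferentiableAt ℝ f x) ∧
      ∀ x > (0:ℝ), ∀ y > (0:ℝ),
        a x y = f x / y ^ 3 ∧
        b x y = ((p - 1) / (2 * (p + 1))) * deriv f x / y ^ 2
          + (p / (p + 1)) * (1 / (2 * x * y) - m) * f x / y + g x :=
  stmt_19_general p m hp1 a b ha hb ha0 heq1 heq2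
end
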